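/- arXiv:2412.00954 — 6 statements merged into one kernel-verified Lean document; each statement's English description precedes it below -/
import Mathlib

section
/- If a real Banach space X admits an ℓ²-frame, i.e., a family (f_i)_{i∈I} in the continuous dual X', indexed by a countable set I, together with constants 0 < A ≤ B such that A‖v‖² ≤ Σ_{i∈I} |f_i(v)|² ≤ B‖v‖² for all v ∈ X, then X is reflexive and separable. -/
/-!
The analysis operator `v ↦ (f i v)ᵢ` maps `X` into `ℓ²(I)`; the upper frame bound makes it
bounded and the lower one makes it bounded below, so it is an isomorphism of `X` onto a closed
subspace of `ℓ²(I)`. That subspace is a Hilbert space, hence reflexive by the Riesz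
representation theorem, and separable because `ℓ²(I)` is, `I` being countable. Both properties
pass to `X` along the isomorphism.
-/

open NormedSpace TopologicalSpace InnerProductSpace
open scoped lp

theorem ContinuousLinearEquiv.surjective_inclusionInDoubleDual {𝕜 E F : Type*}
    [NontriviallyNormedField 𝕜] [NormedAddCommGroup E] [NormedSpace 𝕜 E]
    [NormedAddCommGroup F] [NormedSpace 𝕜 F] (e : E ≃L[𝕜] F)
    (hF : Function.Surjective (inclusionInDoubleDual 𝕜 F)) :
    Function.Surjective (inclusionInDoubleDual 𝕜 E) := by
  intro Φ
  obtain ⟨y, hy⟩ := hF (Φ.comp ((ContinuousLinearMap.compL 𝕜 E F 𝕜).flip e))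
  refine ⟨e.symm y, ContinuousLinearMap.ext fun g => ?_⟩
  have := DFunLike.congr_fun hy (g.comp (e.symm : F →L[𝕜] E))
  simpa [ContinuousLinearMap.comp_assoc] using this

theorem InnerProductSpace.surjective_inclusionInDoubleDual {𝕜 E : Type*} [RCLike 𝕜]
    [NormedAddCommGroup E] [InnerProductSpace 𝕜 E] [CompleteSpace E] :
    Function.Surjective (inclusionInDoubleDual 𝕜 E) := by
  intro Ψ
  -- `Ψ` is represented by the Riesz vector of the linear functional `conj ∘ Ψ ∘ toDual`.
  let φ : StrongDual 𝕜 E := (starL 𝕜 : 𝕜 ≃L⋆[𝕜] 𝕜).toContinuousLinearMap.comp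
    (Ψ.comp (toDual 𝕜 E).toContinuousLinearEquiv.toContinuousLinearMap)
  refine ⟨(toDual 𝕜 E).symm φ, ContinuousLinearMap.ext fun g => ?_⟩
  rw [dual_def, ← (toDual 𝕜 E).apply_symm_apply g, toDual_apply_apply,
    ← inner_conj_symm, toDual_symm_apply]
  simp [φ]

theorem HilbertBasis.separableSpace {ι 𝕜 E : Type*} [RCLike 𝕜] [NormedAddCommGroup E]
    [InnerProductSpace 𝕜 E] [Countable ι] (b : HilbertBasis ι 𝕜 E) : SeparableSpace E := by
  rw [← isSeparable_univ_iff, ← Submodule.top_coe (R := 𝕜), ← b.dense_span,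
    Submodule.topologicalClosure_coe]
  exact (Set.countable_range b).isSeparable.span.closure

theorem lp.norm_sq_eq_tsum_sq {ι : Type*} (x : ℓ²(ι, ℝ)) : ‖x‖ ^ 2 = ∑' i, x i ^ 2 := by
  rw [← real_inner_self_eq_norm_sq, lp.inner_eq_tsum]
  simp [sq]

theorem memℓp_two_of_summable_sq {ι : Type*} {a : ι → ℝ}
    (h : Summable fun i => a i ^ 2) : Memℓp a 2 :=
  memℓp_gen (by simpa using h)

theorem le_sqrt_mul_of_sq_le_mul_sq {a b B : ℝ} (hb : 0 ≤ b) (h : a ^ 2 ≤ B * b ^ 2) :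
    a ≤ √B * b := by
  calc a ≤ √(a ^ 2) := by rw [Real.sqrt_sq_eq_abs]; exact le_abs_self a
    _ ≤ √(B * b ^ 2) := Real.sqrt_le_sqrt h
    _ = √B * b := by rw [Real.sqrt_mul' _ (sq_nonneg b), Real.sqrt_sq hb]

section AnalysisOperator

variable {X I : Type*} [NormedAddCommGroup X] [NormedSpace ℝ X] (f : I → StrongDual ℝ X)
  (hsum : ∀ v : X, Summable fun i => (f i v) ^ 2) (B : ℝ)
  (hup : ∀ v : X, ∑' i, (f i v) ^ 2 ≤ B * ‖v‖ ^ 2)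

noncomputable def analysisOperator : X →L[ℝ] ℓ²(I, ℝ) :=
  LinearMap.mkContinuous
    { toFun v := ⟨fun i => f i v, memℓp_two_of_summable_sq (hsum v)⟩
      map_add' v w := by ext i; exact map_add (f i) v w
      map_smul' c v := by ext i; exact map_smul (f i) c v }
    √B fun v => le_sqrt_mul_of_sq_le_mul_sq (norm_nonneg v) <| by
      rw [lp.norm_sq_eq_tsum_sq]
      exact hup v

@[simp]
theorem analysisOperator_apply (v : X) (i : I) : analysisOperator f hsum B hup v i = f i v := rfl

theorem norm_analysisOperator_sq (v : X) :
    ‖analysisOperator f hsum B hup v‖ ^ 2 = ∑' i, (f i v) ^ 2 := by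
  simp [lp.norm_sq_eq_tsum_sq]

theorem antilipschitzWith_analysisOperator {A : ℝ} (hA : 0 < A)
    (hlow : ∀ v : X, A * ‖v‖ ^ 2 ≤ ∑' i, (f i v) ^ 2) :
    AntilipschitzWith (Real.toNNReal (√A)⁻¹) (analysisOperator f hsum B hup) := by
  refine (analysisOperator f hsum B hup).antilipschitz_of_bound fun v => ?_
  have : A⁻¹ * ‖analysisOperator f hsum B hup v‖ ^ 2 ≥ ‖v‖ ^ 2 := by
    rw [norm_analysisOperator_sq, ge_iff_le, le_inv_mul_iff₀ hA]
    exact hlow v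
  rw [Real.coe_toNNReal _ (by positivity), ← Real.sqrt_inv]
  exact le_sqrt_mul_of_sq_le_mul_sq (norm_nonneg _) this

end AnalysisOperator

theorem stmt0_general {X : Type*} [NormedAddCommGroup X] [NormedSpace ℝ X] [CompleteSpace X]
    {I : Type*} [Countable I] (f : I → StrongDual ℝ X) (A B : ℝ)
    (hA : 0 < A)
    (hsum : ∀ v : X, Summable fun i => (f i v) ^ 2)
    (hlow : ∀ v : X, A * ‖v‖ ^ 2 ≤ ∑' i, (f i v) ^ 2)
    (hup : ∀ v : X, ∑' i, (f i v) ^ 2 ≤ B * ‖v‖ ^ 2) :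
    Function.Surjective (NormedSpace.inclusionInDoubleDual ℝ X) ∧
      TopologicalSpace.SeparableSpace X := by
  set T := analysisOperator f hsum B hup
  have hT : AntilipschitzWith _ T := antilipschitzWith_analysisOperator f hsum B hup hA hlow
  have hclosed : IsClosed (Set.range T) := hT.isClosed_range T.uniformContinuous
  have : CompleteSpace T.range :=
    (hclosed : IsClosed (T.range : Set ℓ²(I, ℝ))).completeSpace_coe
  refine ⟨(T.equivRange hT.injective hclosed).surjective_inclusionInDoubleDual
    surjective_inclusionInDoubleDual, ?_⟩
  have := (default : HilbertBasis I ℝ ℓ²(I, ℝ)).separableSpace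
  have := UniformSpace.secondCountable_of_separable ℓ²(I, ℝ)
  exact (hT.isUniformEmbedding T.uniformContinuous).isEmbedding.separableSpace

/-- If a real Banach space `X` admits an ℓ²-frame `(f i)_{i ∈ I}` (I countable)
with constants `0 < A ≤ B` such that `A‖v‖² ≤ ∑' i, (f i v)² ≤ B‖v‖²` for all `v`,
then `X` is reflexive (the canonical inclusion into the double dual is surjective)
and separable. -/
theorem stmt0 {X : Type*} [NormedAddCommGroup X] [NormedSpace ℝ X] [CompleteSpace X]
    {I : Type*} [Countable I] (f : I → StrongDual ℝ X) (A B : ℝ)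
    (hA : 0 < A) (hAB : A ≤ B)
    (hsum : ∀ v : X, Summable fun i => (f i v) ^ 2)
    (hlow : ∀ v : X, A * ‖v‖ ^ 2 ≤ ∑' i, (f i v) ^ 2)
    (hup : ∀ v : X, ∑' i, (f i v) ^ 2 ≤ B * ‖v‖ ^ 2) :
    Function.Surjective (NormedSpace.inclusionInDoubleDual ℝ X) ∧
      TopologicalSpace.SeparableSpace X :=
  stmt0_general f A B hA hsum hlow hup
end

section
/- Let (f_i)_{i∈I} be an ℓ²-frame for a real Banach space X with bounds 0 < A ≤ B. Then for every v ∈ X the series Σ_{i∈I} f_i(v)·f_i converges in the norm of X' to an element Sv ∈ X', the resulting frame operator S : X → X' is a bounded linear map, S is symmetric in the sense that (Su)(v) = (Sv)(u) for all u, v ∈ X, and S is uniformly elliptic and continuous: A‖u‖² ≤ (Su)(u) ≤ B‖u‖² for all u ∈ X. -/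
/-!
By Cauchy–Schwarz and the upper frame bound, `‖∑ i ∈ t, a i • f i‖ ≤ √(B * ∑ i ∈ t, a i ^ 2)` for
every finite `t`, so for square-summable `a` the series `∑ a i • f i` is Cauchy in the complete
space `X'`. With `a i = f i v` this gives `S v`, with `‖S v‖ ≤ B * ‖v‖`. Evaluating the series at
`u` gives `S v u = ∑ f i v * f i u`, which is symmetric in `u, v` and equals `∑ (f i u) ^ 2` on the
diagonal, where the frame bounds apply.
-/

section Bessel

variable {X : Type*} [NormedAddCommGroup X] [NormedSpace ℝ X] {I : Type*}
  {f : I → StrongDual ℝ X} {B : ℝ}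

theorem sum_sq_apply_le_of_tsum_le (hsum : ∀ v : X, Summable fun i => (f i v) ^ 2)
    (hup : ∀ v : X, ∑' i, (f i v) ^ 2 ≤ B * ‖v‖ ^ 2) (t : Finset I) (v : X) :
    ∑ i ∈ t, (f i v) ^ 2 ≤ B * ‖v‖ ^ 2 :=
  ((hsum v).sum_le_tsum t fun _ _ => sq_nonneg _).trans (hup v)

theorem norm_sum_smul_le_of_bessel (hsum : ∀ v : X, Summable fun i => (f i v) ^ 2)
    (hup : ∀ v : X, ∑' i, (f i v) ^ 2 ≤ B * ‖v‖ ^ 2) (a : I → ℝ) (t : Finset I) :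
    ‖∑ i ∈ t, a i • f i‖ ≤ √(B * ∑ i ∈ t, a i ^ 2) := by
  refine ContinuousLinearMap.opNorm_le_bound _ (Real.sqrt_nonneg _) fun u => ?_
  have cauchy_schwarz : (∑ i ∈ t, a i * f i u) ^ 2 ≤ B * (∑ i ∈ t, a i ^ 2) * ‖u‖ ^ 2 :=
    calc (∑ i ∈ t, a i * f i u) ^ 2 ≤ (∑ i ∈ t, a i ^ 2) * ∑ i ∈ t, (f i u) ^ 2 :=
          Finset.sum_mul_sq_le_sq_mul_sq t a fun i => f i u
      _ ≤ (∑ i ∈ t, a i ^ 2) * (B * ‖u‖ ^ 2) := by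
          gcongr
          exact sum_sq_apply_le_of_tsum_le hsum hup t u
      _ = B * (∑ i ∈ t, a i ^ 2) * ‖u‖ ^ 2 := by ring
  rw [← Real.sqrt_sq (norm_nonneg u), ← Real.sqrt_mul' _ (sq_nonneg _)]
  simpa [sum_apply] using Real.abs_le_sqrt cauchy_schwarz

theorem summable_smul_of_bessel (hsum : ∀ v : X, Summable fun i => (f i v) ^ 2)
    (hup : ∀ v : X, ∑' i, (f i v) ^ 2 ≤ B * ‖v‖ ^ 2) {a : I → ℝ}
    (ha : Summable fun i => a i ^ 2) : Summable fun i => a i • f i := by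
  refine summable_iff_vanishing_norm.2 fun ε hε => ?_
  obtain ⟨s, hs⟩ := summable_iff_vanishing_norm.1 ha (ε ^ 2 / (|B| + 1)) (by positivity)
  refine ⟨s, fun t hts => (norm_sum_smul_le_of_bessel hsum hup a t).trans_lt ?_⟩
  have htail : ∑ i ∈ t, a i ^ 2 < ε ^ 2 / (|B| + 1) :=
    (le_abs_self _).trans_lt (by simpa using hs t hts)
  have hnonneg : 0 ≤ ∑ i ∈ t, a i ^ 2 := Finset.sum_nonneg fun _ _ => sq_nonneg _
  rw [Real.sqrt_lt' hε]
  rw [lt_div_iff₀ (by positivity)] at htail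
  nlinarith [le_abs_self B]

theorem norm_tsum_smul_le_of_bessel (hsum : ∀ v : X, Summable fun i => (f i v) ^ 2)
    (hup : ∀ v : X, ∑' i, (f i v) ^ 2 ≤ B * ‖v‖ ^ 2) {a : I → ℝ}
    (ha : Summable fun i => a i ^ 2) :
    ‖∑' i, a i • f i‖ ≤ √(B * ∑' i, a i ^ 2) :=
  le_of_tendsto_of_tendsto' (summable_smul_of_bessel hsum hup ha).hasSum.norm
    ((ha.hasSum.const_mul B).sqrt) (norm_sum_smul_le_of_bessel hsum hup a)

noncomputable def frameOperator (f : I → StrongDual ℝ X) (v : X) : StrongDual ℝ X :=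
  ∑' i, f i v • f i

theorem hasSum_frameOperator (hsum : ∀ v : X, Summable fun i => (f i v) ^ 2)
    (hup : ∀ v : X, ∑' i, (f i v) ^ 2 ≤ B * ‖v‖ ^ 2) (v : X) :
    HasSum (fun i => f i v • f i) (frameOperator f v) :=
  (summable_smul_of_bessel hsum hup (hsum v)).hasSum

theorem hasSum_frameOperator_apply (hsum : ∀ v : X, Summable fun i => (f i v) ^ 2)
    (hup : ∀ v : X, ∑' i, (f i v) ^ 2 ≤ B * ‖v‖ ^ 2) (v u : X) :
    HasSum (fun i => f i v * f i u) (frameOperator f v u) := by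
  simpa using (hasSum_frameOperator hsum hup v).mapL (ContinuousLinearMap.apply ℝ ℝ u)

theorem frameOperator_comm (hsum : ∀ v : X, Summable fun i => (f i v) ^ 2)
    (hup : ∀ v : X, ∑' i, (f i v) ^ 2 ≤ B * ‖v‖ ^ 2) (u v : X) :
    frameOperator f u v = frameOperator f v u :=
  (hasSum_frameOperator_apply hsum hup u v).unique <| by
    simpa only [mul_comm] using hasSum_frameOperator_apply hsum hup v u

theorem frameOperator_self (hsum : ∀ v : X, Summable fun i => (f i v) ^ 2)
    (hup : ∀ v : X, ∑' i, (f i v) ^ 2 ≤ B * ‖v‖ ^ 2) (u : X) :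
    frameOperator f u u = ∑' i, (f i u) ^ 2 :=
  (by simpa only [sq] using hasSum_frameOperator_apply hsum hup u u : HasSum _ _).tsum_eq.symm

theorem frameOperator_add (hsum : ∀ v : X, Summable fun i => (f i v) ^ 2)
    (hup : ∀ v : X, ∑' i, (f i v) ^ 2 ≤ B * ‖v‖ ^ 2) (u v : X) :
    frameOperator f (u + v) = frameOperator f u + frameOperator f v := by
  refine HasSum.tsum_eq ?_
  simpa only [map_add, add_smul] using
    (hasSum_frameOperator hsum hup u).add (hasSum_frameOperator hsum hup v)

theorem frameOperator_smul (hsum : ∀ v : X, Summable fun i => (f i v) ^ 2)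
    (hup : ∀ v : X, ∑' i, (f i v) ^ 2 ≤ B * ‖v‖ ^ 2) (c : ℝ) (v : X) :
    frameOperator f (c • v) = c • frameOperator f v := by
  refine HasSum.tsum_eq ?_
  simpa only [map_smul, smul_eq_mul, mul_smul] using
    (hasSum_frameOperator hsum hup v).const_smul c

theorem norm_frameOperator_le (hsum : ∀ v : X, Summable fun i => (f i v) ^ 2)
    (hup : ∀ v : X, ∑' i, (f i v) ^ 2 ≤ B * ‖v‖ ^ 2) (hB : 0 ≤ B) (v : X) :
    ‖frameOperator f v‖ ≤ B * ‖v‖ :=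
  calc ‖frameOperator f v‖ ≤ √(B * ∑' i, (f i v) ^ 2) :=
        norm_tsum_smul_le_of_bessel hsum hup (hsum v)
    _ ≤ √((B * ‖v‖) ^ 2) := Real.sqrt_le_sqrt <| by nlinarith [hup v]
    _ = B * ‖v‖ := Real.sqrt_sq (by positivity)

end Bessel

theorem stmt1_general {X : Type*} [NormedAddCommGroup X] [NormedSpace ℝ X]
    {I : Type*} (f : I → StrongDual ℝ X) (A B : ℝ)
    (hA : 0 < A) (hAB : A ≤ B)
    (hsum : ∀ v : X, Summable fun i => (f i v) ^ 2)
    (hlow : ∀ v : X, A * ‖v‖ ^ 2 ≤ ∑' i, (f i v) ^ 2)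
    (hup : ∀ v : X, ∑' i, (f i v) ^ 2 ≤ B * ‖v‖ ^ 2) :
    ∃ S : X →L[ℝ] StrongDual ℝ X,
      (∀ v : X, HasSum (fun i => f i v • f i) (S v)) ∧
      (∀ u v : X, S u v = S v u) ∧
      (∀ u : X, A * ‖u‖ ^ 2 ≤ S u u ∧ S u u ≤ B * ‖u‖ ^ 2) := by
  have hB : 0 ≤ B := hA.le.trans hAB
  let S : X →ₗ[ℝ] StrongDual ℝ X :=
    { toFun := frameOperator f
      map_add' := frameOperator_add hsum hup
      map_smul' := frameOperator_smul hsum hup }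
  refine ⟨S.mkContinuous B (norm_frameOperator_le hsum hup hB), hasSum_frameOperator hsum hup,
    frameOperator_comm hsum hup, fun u => ?_⟩
  change A * ‖u‖ ^ 2 ≤ frameOperator f u u ∧ frameOperator f u u ≤ B * ‖u‖ ^ 2
  rw [frameOperator_self hsum hup]
  exact ⟨hlow u, hup u⟩

/-- For an ℓ²-frame `(f i)_{i ∈ I}` of a real Banach space `X` with bounds
`0 < A ≤ B`, the series `∑ i, f i v • f i` converges in the dual norm to `S v`, where the
frame operator `S : X → X'` is a bounded linear map; `S` is symmetric, i.e.
`(S u) v = (S v) u`, and uniformly elliptic and continuous: `A‖u‖² ≤ (S u) u ≤ B‖u‖²`. -/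
theorem stmt1 {X : Type*} [NormedAddCommGroup X] [NormedSpace ℝ X] [CompleteSpace X]
    {I : Type*} [Countable I] (f : I → StrongDual ℝ X) (A B : ℝ)
    (hA : 0 < A) (hAB : A ≤ B)
    (hsum : ∀ v : X, Summable fun i => (f i v) ^ 2)
    (hlow : ∀ v : X, A * ‖v‖ ^ 2 ≤ ∑' i, (f i v) ^ 2)
    (hup : ∀ v : X, ∑' i, (f i v) ^ 2 ≤ B * ‖v‖ ^ 2) :
    ∃ S : X →L[ℝ] StrongDual ℝ X,
      (∀ v : X, HasSum (fun i => f i v • f i) (S v)) ∧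
      (∀ u v : X, S u v = S v u) ∧
      (∀ u : X, A * ‖u‖ ^ 2 ≤ S u u ∧ S u u ≤ B * ‖u‖ ^ 2) :=
  stmt1_general f A B hA hAB hsum hlow hup
end

section
/- Let (f_i)_{i∈I} be an ℓ²-frame for a real Banach space X with bounds 0 < A ≤ B and let S : X → X' be the frame operator. Then S is bijective with bounded inverse S⁻¹ : X' → X, and (1/B)‖u'‖² ≤ u'(S⁻¹u') ≤ (1/A)‖u'‖² holds for every u' ∈ X', where ‖u'‖ denotes the dual norm on X'. -/
/-!
Read as the bilinear form `(v, w) ↦ ∑ fᵢ(v) fᵢ(w)`, the frame operator `S` is symmetric and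
satisfies `A‖v‖² ≤ S v v ≤ B‖v‖²`. Coercivity gives `A‖v‖ ≤ ‖S v‖`, hence injectivity and
`A · S w w ≤ ‖S w‖²`; Cauchy–Schwarz for the form together with the upper bound gives
`‖S w‖² ≤ B · S w w`. For surjectivity onto `u'`, the energy `v ↦ S v v / 2 - u' v` is bounded
below and, by the parallelogram identity, its minimising sequences are Cauchy; at a minimiser `m`
the derivative `S m - u'` vanishes. The inverse is bounded by the open mapping theorem, and the
two estimates become the claimed bounds on `u'(S⁻¹ u') = S w w` for `w = S⁻¹ u'`.
-/

open Filter Topology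

theorem exists_forall_le_of_sq_dist_le {M : Type*} [MetricSpace M] [CompleteSpace M] [Nonempty M]
    {F : M → ℝ} (hF : Continuous F) (hbdd : BddBelow (Set.range F)) {c : ℝ} (hc : 0 < c)
    (hdist : ∀ p q, c * dist p q ^ 2 ≤ F p + F q - 2 * ⨅ x, F x) :
    ∃ m, ∀ x, F m ≤ F x := by
  set d := ⨅ x, F x
  obtain ⟨y, -, hy, hyF⟩ := exists_seq_tendsto_sInf (Set.range_nonempty F) hbdd
  choose x hx using hyF
  have hFx : Tendsto (F ∘ x) atTop (𝓝 d) := by rwa [show F ∘ x = y from funext hx]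
  have hcauchy : CauchySeq x := by
    rw [cauchySeq_iff_tendsto_dist_atTop_0]
    have hgap : Tendsto (fun n : ℕ × ℕ => √((F (x n.1) + F (x n.2) - 2 * d) / c)) atTop (𝓝 0) := by
      rw [← prod_atTop_atTop_eq]
      have := (((hFx.comp tendsto_fst).add (hFx.comp tendsto_snd)).sub_const (2 * d)).div_const c
      rw [show (d + d - 2 * d) / c = 0 by ring] at this
      simpa using this.sqrt
    refine squeeze_zero (fun _ => dist_nonneg) (fun n => Real.le_sqrt_of_sq_le ?_) hgap
    rw [le_div_iff₀ hc, mul_comm]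
    exact hdist _ _
  obtain ⟨m, hm⟩ := cauchySeq_tendsto_of_complete hcauchy
  have hFm : F m = d := tendsto_nhds_unique ((hF.tendsto m).comp hm) hFx
  exact ⟨m, fun z => hFm ▸ ciInf_le hbdd z⟩

namespace ContinuousLinearMap

variable {E : Type*} [NormedAddCommGroup E] [NormedSpace ℝ E] (b : E →L[ℝ] StrongDual ℝ E)

theorem apply_sq_le_of_symm (hpos : ∀ v, 0 ≤ b v v) (hsymm : ∀ v w, b v w = b w v) (v w : E) :
    b v w ^ 2 ≤ b v v * b w w :=
  LinearMap.BilinForm.apply_sq_le_of_symm b.toLinearMap₁₂ hpos ⟨hsymm⟩ v w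

theorem mul_norm_le_norm_apply {A : ℝ} (hcoer : ∀ v, A * ‖v‖ ^ 2 ≤ b v v) (v : E) :
    A * ‖v‖ ≤ ‖b v‖ := by
  rcases (norm_nonneg v).eq_or_lt with hv | hv
  · simp [← hv]
  · refine le_of_mul_le_mul_right ?_ hv
    calc A * ‖v‖ * ‖v‖ = A * ‖v‖ ^ 2 := by ring
      _ ≤ b v v := hcoer v
      _ ≤ ‖b v‖ * ‖v‖ := (le_abs_self _).trans ((b v).le_opNorm v)

theorem injective_of_coercive {A : ℝ} (hA : 0 < A) (hcoer : ∀ v, A * ‖v‖ ^ 2 ≤ b v v) :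
    Function.Injective b := by
  refine (injective_iff_map_eq_zero b).mpr fun v hv => norm_le_zero_iff.mp ?_
  have := b.mul_norm_le_norm_apply hcoer v
  rw [hv, norm_zero] at this
  exact nonpos_of_mul_nonpos_right this hA

theorem mul_apply_self_le_norm_sq {A : ℝ} (hA : 0 ≤ A) (hcoer : ∀ v, A * ‖v‖ ^ 2 ≤ b v v)
    (v : E) : A * b v v ≤ ‖b v‖ ^ 2 :=
  calc A * b v v ≤ A * (‖b v‖ * ‖v‖) :=
        mul_le_mul_of_nonneg_left ((le_abs_self _).trans ((b v).le_opNorm v)) hA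
    _ = ‖b v‖ * (A * ‖v‖) := by ring
    _ ≤ ‖b v‖ ^ 2 := by
        rw [sq]; exact mul_le_mul_of_nonneg_left (b.mul_norm_le_norm_apply hcoer v) (norm_nonneg _)

theorem norm_apply_sq_le {B : ℝ} (hB : 0 ≤ B) (hpos : ∀ v, 0 ≤ b v v)
    (hsymm : ∀ v w, b v w = b w v) (hbdd : ∀ v, b v v ≤ B * ‖v‖ ^ 2) (v : E) :
    ‖b v‖ ^ 2 ≤ B * b v v := by
  have hnorm : ‖b v‖ ≤ √(B * b v v) := by
    refine (b v).opNorm_le_bound (Real.sqrt_nonneg _) fun w => ?_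
    rw [← Real.sqrt_sq (norm_nonneg w), ← Real.sqrt_mul (mul_nonneg hB (hpos v))]
    refine Real.abs_le_sqrt ?_
    calc b v w ^ 2 ≤ b v v * b w w := b.apply_sq_le_of_symm hpos hsymm v w
      _ ≤ b v v * (B * ‖w‖ ^ 2) := mul_le_mul_of_nonneg_left (hbdd w) (hpos v)
      _ = B * b v v * ‖w‖ ^ 2 := by ring
  calc ‖b v‖ ^ 2 ≤ √(B * b v v) ^ 2 := pow_le_pow_left₀ (norm_nonneg _) hnorm 2
    _ = B * b v v := Real.sq_sqrt (mul_nonneg hB (hpos v))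

noncomputable def energy (u : StrongDual ℝ E) (v : E) : ℝ := b v v / 2 - u v

variable {b}

theorem continuous_energy (u : StrongDual ℝ E) : Continuous (b.energy u) :=
  ((isBoundedBilinearMap_apply.continuous.comp (b.continuous.prodMk continuous_id)).div_const 2).sub
    u.continuous

theorem energy_add_energy (hsymm : ∀ v w, b v w = b w v) (u : StrongDual ℝ E) (p q : E) :
    b.energy u p + b.energy u q =
      2 * b.energy u ((1 / 2 : ℝ) • (p + q)) + b (p - q) (p - q) / 4 := by
  simp only [energy, map_smul, map_add, map_sub, smul_apply, add_apply, sub_apply, smul_eq_mul,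
    hsymm q p]
  ring

theorem neg_sq_div_le_energy {A : ℝ} (hA : 0 < A) (hcoer : ∀ v, A * ‖v‖ ^ 2 ≤ b v v)
    (u : StrongDual ℝ E) (v : E) : -(‖u‖ ^ 2 / (2 * A)) ≤ b.energy u v := by
  have hu : u v ≤ ‖u‖ * ‖v‖ := (le_abs_self _).trans (u.le_opNorm v)
  have hsq : 0 ≤ (A * ‖v‖ - ‖u‖) ^ 2 / (2 * A) := by positivity
  have hexpand : (A * ‖v‖ - ‖u‖) ^ 2 / (2 * A) =
      A * ‖v‖ ^ 2 / 2 - ‖u‖ * ‖v‖ + ‖u‖ ^ 2 / (2 * A) := by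
    field_simp
    ring
  rw [energy]
  linarith [hcoer v]

theorem exists_forall_energy_le [CompleteSpace E] {A : ℝ} (hA : 0 < A)
    (hcoer : ∀ v, A * ‖v‖ ^ 2 ≤ b v v) (hsymm : ∀ v w, b v w = b w v) (u : StrongDual ℝ E) :
    ∃ m, ∀ v, b.energy u m ≤ b.energy u v := by
  have hbdd : BddBelow (Set.range (b.energy u)) :=
    ⟨_, Set.forall_mem_range.mpr (neg_sq_div_le_energy hA hcoer u)⟩
  refine exists_forall_le_of_sq_dist_le (continuous_energy u) hbdd (by positivity : 0 < A / 4)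
    fun p q => ?_
  have hmid := ciInf_le hbdd ((1 / 2 : ℝ) • (p + q))
  have hdiff := hcoer (p - q)
  rw [dist_eq_norm]
  linarith [energy_add_energy hsymm u p q]

theorem apply_eq_of_forall_energy_le (hsymm : ∀ v w, b v w = b w v) {u : StrongDual ℝ E} {m : E}
    (hm : ∀ v, b.energy u m ≤ b.energy u v) : b m = u := by
  have hderiv :
      HasFDerivAt (b.energy u) ((1 / 2 : ℝ) • ((b m).comp (.id ℝ E) + b.flip m) - u) m := by
    have hfun : b.energy u = fun v => b v (id v) * (1 / 2) - u v := by
      funext v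
      simp only [energy, id, div_eq_mul_one_div (b v v)]
    rw [hfun]
    exact (((b.hasFDerivAt).clm_apply (hasFDerivAt_id m)).mul_const (1 / 2 : ℝ)).sub u.hasFDerivAt
  have hzero := IsLocalMin.hasFDerivAt_eq_zero (Eventually.of_forall hm) hderiv
  ext w
  have := congr($hzero w)
  simp only [sub_apply, smul_apply, add_apply, comp_id, flip_apply, hsymm w m, zero_apply,
    smul_eq_mul] at this
  linarith

theorem surjective_of_coercive [CompleteSpace E] {A : ℝ} (hA : 0 < A)
    (hcoer : ∀ v, A * ‖v‖ ^ 2 ≤ b v v) (hsymm : ∀ v w, b v w = b w v) : Function.Surjective b :=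
  fun u =>
    (exists_forall_energy_le hA hcoer hsymm u).imp fun _ => apply_eq_of_forall_energy_le hsymm

end ContinuousLinearMap

section Frame

variable {X : Type*} [NormedAddCommGroup X] [NormedSpace ℝ X] {I : Type*}
  {f : I → StrongDual ℝ X} {S : X →L[ℝ] StrongDual ℝ X}

theorem hasSum_frameOperator_apply_s2 (hS : ∀ v, HasSum (fun i => f i v • f i) (S v)) (v w : X) :
    HasSum (fun i => f i v * f i w) (S v w) :=
  (hS v).mapL (ContinuousLinearMap.apply ℝ ℝ w)

theorem frameOperator_symm (hS : ∀ v, HasSum (fun i => f i v • f i) (S v)) (v w : X) :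
    S v w = S w v :=
  (hasSum_frameOperator_apply_s2 hS v w).unique <| by
    simpa only [mul_comm] using hasSum_frameOperator_apply_s2 hS w v

theorem frameOperator_apply_self (hS : ∀ v, HasSum (fun i => f i v • f i) (S v)) (v : X) :
    S v v = ∑' i, f i v ^ 2 := by
  simpa only [sq] using (hasSum_frameOperator_apply_s2 hS v v).tsum_eq.symm

end Frame

theorem stmt2_general {X : Type*} [NormedAddCommGroup X] [NormedSpace ℝ X] [CompleteSpace X]
    {I : Type*} (f : I → StrongDual ℝ X) (A B : ℝ)
    (hA : 0 < A) (hAB : A ≤ B)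
    (hlow : ∀ v : X, A * ‖v‖ ^ 2 ≤ ∑' i, (f i v) ^ 2)
    (hup : ∀ v : X, ∑' i, (f i v) ^ 2 ≤ B * ‖v‖ ^ 2)
    (S : X →L[ℝ] StrongDual ℝ X)
    (hS : ∀ v : X, HasSum (fun i => f i v • f i) (S v)) :
    ∃ Sinv : StrongDual ℝ X →L[ℝ] X,
      (∀ v : X, Sinv (S v) = v) ∧
      (∀ u' : StrongDual ℝ X, S (Sinv u') = u') ∧
      (∀ u' : StrongDual ℝ X,
        (1 / B) * ‖u'‖ ^ 2 ≤ u' (Sinv u') ∧ u' (Sinv u') ≤ (1 / A) * ‖u'‖ ^ 2) := by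
  have hsymm := frameOperator_symm hS
  have hcoer : ∀ v, A * ‖v‖ ^ 2 ≤ S v v := fun v => frameOperator_apply_self hS v ▸ hlow v
  have hbdd : ∀ v, S v v ≤ B * ‖v‖ ^ 2 := fun v => frameOperator_apply_self hS v ▸ hup v
  have hpos : ∀ v, 0 ≤ S v v := fun v => (by positivity : 0 ≤ A * ‖v‖ ^ 2).trans (hcoer v)
  let e := ContinuousLinearEquiv.ofBijective S
    (LinearMap.ker_eq_bot.mpr (S.injective_of_coercive hA hcoer))
    (LinearMap.range_eq_top.mpr (S.surjective_of_coercive hA hcoer hsymm))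
  refine ⟨e.symm, e.symm_apply_apply, e.apply_symm_apply, fun u' => ?_⟩
  obtain ⟨w, rfl⟩ := e.surjective u'
  have hB : 0 < B := hA.trans_le hAB
  simp only [ContinuousLinearEquiv.coe_coe, ContinuousLinearEquiv.symm_apply_apply]
  constructor
  · rw [one_div_mul_eq_div, div_le_iff₀ hB, mul_comm]
    exact S.norm_apply_sq_le hB.le hpos hsymm hbdd w
  · rw [one_div_mul_eq_div, le_div_iff₀ hA, mul_comm]
    exact S.mul_apply_self_le_norm_sq hA.le hcoer w

/-- For an ℓ²-frame `(f i)_{i ∈ I}` of a real Banach space `X` with bounds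
`0 < A ≤ B` and frame operator `S : X → X'` (given by `S v = ∑ i, f i v • f i`), the
operator `S` is bijective with a bounded inverse `S⁻¹ : X' → X`, and
`(1/B)‖u'‖² ≤ u'(S⁻¹ u') ≤ (1/A)‖u'‖²` for every `u' ∈ X'` (dual norm on `X'`). -/
theorem stmt2 {X : Type*} [NormedAddCommGroup X] [NormedSpace ℝ X] [CompleteSpace X]
    {I : Type*} [Countable I] (f : I → StrongDual ℝ X) (A B : ℝ)
    (hA : 0 < A) (hAB : A ≤ B)
    (hsum : ∀ v : X, Summable fun i => (f i v) ^ 2)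
    (hlow : ∀ v : X, A * ‖v‖ ^ 2 ≤ ∑' i, (f i v) ^ 2)
    (hup : ∀ v : X, ∑' i, (f i v) ^ 2 ≤ B * ‖v‖ ^ 2)
    (S : X →L[ℝ] StrongDual ℝ X)
    (hS : ∀ v : X, HasSum (fun i => f i v • f i) (S v)) :
    ∃ Sinv : StrongDual ℝ X →L[ℝ] X,
      (∀ v : X, Sinv (S v) = v) ∧
      (∀ u' : StrongDual ℝ X, S (Sinv u') = u') ∧
      (∀ u' : StrongDual ℝ X,
        (1 / B) * ‖u'‖ ^ 2 ≤ u' (Sinv u') ∧ u' (Sinv u') ≤ (1 / A) * ‖u'‖ ^ 2) :=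
  stmt2_general f A B hA hAB hlow hup S hS
end

section
/- Let (f_i)_{i∈I} be an ℓ²-frame for a real Banach space X with frame operator S (bijective with bounded inverse S⁻¹), analysis operator T* and synthesis operator T. Then the bounded operator G := T* ∘ S⁻¹ ∘ T on ℓ²(I) satisfies ⟨Gα, α⟩_{ℓ²} = ‖Gα‖²_{ℓ²} for all α ∈ ℓ²(I), and the range of G equals the range of T*; consequently G is the orthogonal projection of ℓ²(I) onto the range of T*. -/
open scoped RealInnerProductSpace

/-!
Pairing with the synthesis operator is the inner product with the analysis operator,
`(T α) v = ⟪T* v, α⟫`, so `T` is the adjoint of `T*` read through the duality. Writing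
`G = T* S⁻¹ T`, the identity `S S⁻¹ = 1` turns `⟪G α, β⟫ = (T β)(S⁻¹ T α)` into
`⟪G α, G β⟫`, which is symmetric in `α, β`; and `S⁻¹ S = 1` gives `G T* = T*`, hence
idempotence and `range G = range T*`.
-/

theorem hasSum_smul_apply_eq_inner {X I : Type*} [NormedAddCommGroup X] [NormedSpace ℝ X]
    {f : I → StrongDual ℝ X} {Tstar : X →L[ℝ] lp (fun _ : I => ℝ) 2}
    (hTstar : ∀ (v : X) (i : I), Tstar v i = f i v) {α : lp (fun _ : I => ℝ) 2}
    {φ : StrongDual ℝ X} (hφ : HasSum (fun i => α i • f i) φ) (v : X) :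
    φ v = ⟪Tstar v, α⟫ := by
  have hφv : HasSum (fun i => α i * f i v) (φ v) := by
    simpa using hφ.mapL (NormedSpace.inclusionInDoubleDual ℝ X v)
  have hinner : HasSum (fun i => ⟪Tstar v i, α i⟫) ⟪Tstar v, α⟫ := lp.hasSum_inner _ _
  simp only [hTstar, RCLike.inner_apply, starRingEnd_apply, star_trivial] at hinner
  exact hφv.unique hinner

section FrameProjection

variable {X H : Type*} [NormedAddCommGroup X] [NormedSpace ℝ X]
  [NormedAddCommGroup H] [InnerProductSpace ℝ H]
  {Tstar : X →L[ℝ] H} {T : H →L[ℝ] StrongDual ℝ X} {Sinv : StrongDual ℝ X →L[ℝ] X}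

theorem comp_sinv_comp_apply_tstar (hleft : ∀ v : X, Sinv (T (Tstar v)) = v) (v : X) :
    (Tstar ∘L Sinv ∘L T) (Tstar v) = Tstar v := by
  simp only [ContinuousLinearMap.comp_apply, hleft]

theorem range_comp_sinv_comp (hleft : ∀ v : X, Sinv (T (Tstar v)) = v) :
    Set.range (Tstar ∘L Sinv ∘L T) = Set.range Tstar := by
  refine Set.Subset.antisymm ?_ ?_
  · rintro _ ⟨α, rfl⟩
    exact ⟨Sinv (T α), rfl⟩
  · rintro _ ⟨v, rfl⟩
    exact ⟨Tstar v, comp_sinv_comp_apply_tstar hleft v⟩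

theorem comp_sinv_comp_idem (hleft : ∀ v : X, Sinv (T (Tstar v)) = v) (α : H) :
    (Tstar ∘L Sinv ∘L T) ((Tstar ∘L Sinv ∘L T) α) = (Tstar ∘L Sinv ∘L T) α :=
  comp_sinv_comp_apply_tstar hleft _

variable (hadj : ∀ (v : X) (α : H), T α v = ⟪Tstar v, α⟫)
  (hright : ∀ u : StrongDual ℝ X, T (Tstar (Sinv u)) = u)
include hadj hright

theorem inner_comp_sinv_comp_left (α β : H) :
    ⟪(Tstar ∘L Sinv ∘L T) α, β⟫ = ⟪(Tstar ∘L Sinv ∘L T) α, (Tstar ∘L Sinv ∘L T) β⟫ :=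
  calc ⟪Tstar (Sinv (T α)), β⟫ = T β (Sinv (T α)) := (hadj _ _).symm
    _ = T (Tstar (Sinv (T β))) (Sinv (T α)) := by rw [hright]
    _ = ⟪Tstar (Sinv (T α)), Tstar (Sinv (T β))⟫ := hadj _ _

theorem inner_comp_sinv_comp_self (α : H) :
    ⟪(Tstar ∘L Sinv ∘L T) α, α⟫ = ‖(Tstar ∘L Sinv ∘L T) α‖ ^ 2 := by
  rw [inner_comp_sinv_comp_left hadj hright, real_inner_self_eq_norm_sq]

theorem inner_comp_sinv_comp_symm (α β : H) :
    ⟪(Tstar ∘L Sinv ∘L T) α, β⟫ = ⟪α, (Tstar ∘L Sinv ∘L T) β⟫ :=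
  calc ⟪(Tstar ∘L Sinv ∘L T) α, β⟫
      = ⟪(Tstar ∘L Sinv ∘L T) β, (Tstar ∘L Sinv ∘L T) α⟫ := by
        rw [inner_comp_sinv_comp_left hadj hright, real_inner_comm]
    _ = ⟪α, (Tstar ∘L Sinv ∘L T) β⟫ := by
        rw [← inner_comp_sinv_comp_left hadj hright, real_inner_comm]

end FrameProjection

theorem stmt6_general {X : Type*} [NormedAddCommGroup X] [NormedSpace ℝ X]
    {I : Type*} (f : I → StrongDual ℝ X)
    (Tstar : X →L[ℝ] lp (fun _ : I => ℝ) 2)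
    (hTstar : ∀ (v : X) (i : I), Tstar v i = f i v)
    (T : lp (fun _ : I => ℝ) 2 →L[ℝ] StrongDual ℝ X)
    (hT : ∀ α : lp (fun _ : I => ℝ) 2, HasSum (fun i => α i • f i) (T α))
    (S : X →L[ℝ] StrongDual ℝ X)
    (hS : ∀ v : X, S v = T (Tstar v))
    (Sinv : StrongDual ℝ X →L[ℝ] X)
    (hleft : ∀ v : X, Sinv (S v) = v)
    (hright : ∀ u' : StrongDual ℝ X, S (Sinv u') = u')
    (G : lp (fun _ : I => ℝ) 2 →L[ℝ] lp (fun _ : I => ℝ) 2)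
    (hG : G = Tstar ∘L Sinv ∘L T) :
    (∀ α : lp (fun _ : I => ℝ) 2, ⟪G α, α⟫ = ‖G α‖ ^ 2) ∧
    Set.range G = Set.range Tstar ∧
    (∀ α : lp (fun _ : I => ℝ) 2, G (G α) = G α) ∧
    (∀ α β : lp (fun _ : I => ℝ) 2, ⟪G α, β⟫ = ⟪α, G β⟫) := by
  subst hG
  have hadj : ∀ v α, T α v = ⟪Tstar v, α⟫ := fun v α =>
    hasSum_smul_apply_eq_inner hTstar (hT α) v
  have hleft' : ∀ v, Sinv (T (Tstar v)) = v := fun v => hS v ▸ hleft v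
  have hright' : ∀ u, T (Tstar (Sinv u)) = u := fun u => hS (Sinv u) ▸ hright u
  exact ⟨inner_comp_sinv_comp_self hadj hright', range_comp_sinv_comp hleft',
    comp_sinv_comp_idem hleft', inner_comp_sinv_comp_symm hadj hright'⟩

/-- With analysis operator `T*`, synthesis operator `T` and frame operator
`S = T ∘ T*` (bijective with bounded inverse `Sinv`), the bounded operator
`G := T* ∘ Sinv ∘ T` on `ℓ²(I)` satisfies `⟪G α, α⟫ = ‖G α‖²` for all `α`, and
`range G = range T*`; consequently `G` is the orthogonal projection of `ℓ²(I)` onto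
`range T*` (idempotent and self-adjoint). -/
theorem stmt6 {X : Type*} [NormedAddCommGroup X] [NormedSpace ℝ X] [CompleteSpace X]
    {I : Type*} [Countable I] (f : I → StrongDual ℝ X) (A B : ℝ)
    (hA : 0 < A) (hAB : A ≤ B)
    (hsum : ∀ v : X, Summable fun i => (f i v) ^ 2)
    (hlow : ∀ v : X, A * ‖v‖ ^ 2 ≤ ∑' i, (f i v) ^ 2)
    (hup : ∀ v : X, ∑' i, (f i v) ^ 2 ≤ B * ‖v‖ ^ 2)
    (Tstar : X →L[ℝ] lp (fun _ : I => ℝ) 2)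
    (hTstar : ∀ (v : X) (i : I), Tstar v i = f i v)
    (T : lp (fun _ : I => ℝ) 2 →L[ℝ] StrongDual ℝ X)
    (hT : ∀ α : lp (fun _ : I => ℝ) 2, HasSum (fun i => α i • f i) (T α))
    (S : X →L[ℝ] StrongDual ℝ X)
    (hS : ∀ v : X, S v = T (Tstar v))
    (Sinv : StrongDual ℝ X →L[ℝ] X)
    (hleft : ∀ v : X, Sinv (S v) = v)
    (hright : ∀ u' : StrongDual ℝ X, S (Sinv u') = u')
    (G : lp (fun _ : I => ℝ) 2 →L[ℝ] lp (fun _ : I => ℝ) 2)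
    (hG : G = Tstar ∘L Sinv ∘L T) :
    (∀ α : lp (fun _ : I => ℝ) 2, ⟪G α, α⟫ = ‖G α‖ ^ 2) ∧
    Set.range G = Set.range Tstar ∧
    (∀ α : lp (fun _ : I => ℝ) 2, G (G α) = G α) ∧
    (∀ α β : lp (fun _ : I => ℝ) 2, ⟪G α, β⟫ = ⟪α, G β⟫) :=
  stmt6_general f Tstar hTstar T hT S hS Sinv hleft hright G hG
end

section
/- Let (f_i)_{i∈I} be an ℓ²-frame for a real Banach space X with frame operator S (bijective with bounded inverse S⁻¹), and suppose there exists a biorthogonal family (g_j)_{j∈I} ⊂ X, i.e., f_i(g_j) = δ_{i,j} for all i, j ∈ I. Then S g_j = f_j for every j ∈ I, hence g_j = S⁻¹f_j, and consequently f_i(S⁻¹f_j) = δ_{i,j} and (S g_i)(g_j) = δ_{i,j} for all i, j ∈ I; that is, (f_i) and (g_i) are orthonormal with respect to the inner products ⟨u',v'⟩_{X'} := u'(S⁻¹v') on X' and ⟨u,v⟩_X := (Su)(v) on X, respectively. -/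
/-! Biorthogonality collapses the series `∑ i, f i (g j) • f i` defining `S (g j)` to its
`j`-th term, so `S (g j) = f j`. -/

theorem hasSum_smul_of_biorthogonal {𝕜 X I : Type*} [NontriviallyNormedField 𝕜]
    [NormedAddCommGroup X] [NormedSpace 𝕜 X] [DecidableEq I]
    (f : I → StrongDual 𝕜 X) (g : I → X) (hbi : ∀ i j : I, f i (g j) = if i = j then 1 else 0)
    (j : I) : HasSum (fun i => f i (g j) • f i) (f j) := by
  have hterm : (fun i => f i (g j) • f i) = fun i => if i = j then f j else 0 := by
    funext i
    by_cases h : i = j <;> ext <;> simp [hbi, h]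
  simpa only [hterm] using hasSum_ite_eq j (f j)

theorem stmt7_general {X : Type*} [NormedAddCommGroup X] [NormedSpace ℝ X]
    {I : Type*} [DecidableEq I]
    (f : I → StrongDual ℝ X)
    (S : X →L[ℝ] StrongDual ℝ X)
    (hS : ∀ v : X, HasSum (fun i => f i v • f i) (S v))
    (Sinv : StrongDual ℝ X →L[ℝ] X)
    (hleft : ∀ v : X, Sinv (S v) = v)
    (g : I → X) (hbi : ∀ i j : I, f i (g j) = if i = j then 1 else 0) :
    (∀ j : I, S (g j) = f j) ∧
    (∀ j : I, g j = Sinv (f j)) ∧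
    (∀ i j : I, f i (Sinv (f j)) = if i = j then 1 else 0) ∧
    (∀ i j : I, S (g i) (g j) = if i = j then 1 else 0) := by
  have hSg : ∀ j, S (g j) = f j := fun j =>
    (hS (g j)).unique (hasSum_smul_of_biorthogonal f g hbi j)
  have hg : ∀ j, g j = Sinv (f j) := fun j => by rw [← hSg j, hleft]
  refine ⟨hSg, hg, fun i j => ?_, fun i j => ?_⟩
  · rw [← hg j, hbi]
  · rw [hSg i, hbi]

/-- Let `(f i)` be an ℓ²-frame of `X` with frame operator `S` (bijective with
bounded inverse `Sinv`) and suppose `(g j) ⊂ X` is biorthogonal, i.e. `f i (g j) = δᵢⱼ`.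
Then `S (g j) = f j`, hence `g j = Sinv (f j)`, and consequently
`f i (Sinv (f j)) = δᵢⱼ` and `(S (g i)) (g j) = δᵢⱼ`; i.e. `(f i)` and `(g i)` are
orthonormal w.r.t. the inner products `⟨u',v'⟩ = u'(Sinv v')` on `X'` and
`⟨u,v⟩ = (S u) v` on `X`, respectively. -/
theorem stmt7 {X : Type*} [NormedAddCommGroup X] [NormedSpace ℝ X] [CompleteSpace X]
    {I : Type*} [Countable I] [DecidableEq I]
    (f : I → StrongDual ℝ X) (A B : ℝ)
    (hA : 0 < A) (hAB : A ≤ B)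
    (hsum : ∀ v : X, Summable fun i => (f i v) ^ 2)
    (hlow : ∀ v : X, A * ‖v‖ ^ 2 ≤ ∑' i, (f i v) ^ 2)
    (hup : ∀ v : X, ∑' i, (f i v) ^ 2 ≤ B * ‖v‖ ^ 2)
    (S : X →L[ℝ] StrongDual ℝ X)
    (hS : ∀ v : X, HasSum (fun i => f i v • f i) (S v))
    (Sinv : StrongDual ℝ X →L[ℝ] X)
    (hleft : ∀ v : X, Sinv (S v) = v)
    (hright : ∀ u' : StrongDual ℝ X, S (Sinv u') = u')
    (g : I → X) (hbi : ∀ i j : I, f i (g j) = if i = j then 1 else 0) :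
    (∀ j : I, S (g j) = f j) ∧
    (∀ j : I, g j = Sinv (f j)) ∧
    (∀ i j : I, f i (Sinv (f j)) = if i = j then 1 else 0) ∧
    (∀ i j : I, S (g i) (g j) = if i = j then 1 else 0) :=
  stmt7_general f S hS Sinv hleft g hbi
end

section
/- Let (f_i)_{i∈I} be an ℓ²-frame for a real Banach space X with analysis operator T*, frame operator S (bijective with bounded inverse S⁻¹), and let U be a bounded linear operator on ℓ²(I) such that U*(Uα) = α for every α in the range of T* (an isometry on the range of T*). For k ∈ I define ψ_k ∈ X' by ψ_k(v) := (U T* v)_k and ψ̃_k := S⁻¹ψ_k ∈ X. Then the family (ψ_k)_{k∈I} has the same frame operator as (f_i), i.e., Σ_{k∈I} ψ_k(u)ψ_k(v) = (Su)(v) for all u, v ∈ X, and the reconstruction formula v = Σ_{k∈I} ψ_k(v)·ψ̃_k holds for every v ∈ X with convergence in the norm of X; in particular (ψ_k) and (ψ̃_k) are dual frames. -/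
/-!
Write `g := U ∘ T*`, so that `ψ k v = (g v) k`. For any bounded `g : X → ℓ²(I)` the family of
coordinate functionals `v ↦ (g v) k` has frame operator `v ↦ ⟪g v, g ·⟫`: expanding `g v` in the
unit vectors of `ℓ²(I)` and mapping the expansion through the bounded map `a ↦ ⟪a, g ·⟫` gives a
series converging in the norm of `X'`. For `g = T*` this identifies `S v = ⟪T* v, T* ·⟫`, and since
`U* U` is the identity on the range of `T*`, `g = U T*` has the same frame operator. Applying `S⁻¹`
to the norm-convergent series `S v = Σ ψ k v • ψ k` gives the reconstruction formula.
-/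

open ContinuousLinearMap

theorem hasSum_apply_smul_innerSL_comp {X I : Type*} [NormedAddCommGroup X] [NormedSpace ℝ X]
    (g : X →L[ℝ] lp (fun _ : I => ℝ) 2) (ψ : I → StrongDual ℝ X)
    (hψ : ∀ (k : I) (v : X), ψ k v = g v k) (v : X) :
    HasSum (fun k => ψ k v • ψ k) ((innerSL ℝ (g v)).comp g) := by
  classical
  let Φ := ((compL ℝ X _ ℝ).flip g).comp (innerSL ℝ (E := lp (fun _ : I => ℝ) 2))
  have hΦ_single : ∀ (k : I) (c : ℝ), Φ (lp.single 2 k c) = c • ψ k := by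
    intro k c
    ext u
    simp [Φ, lp.inner_single_left, hψ, mul_comm]
  have h := (lp.hasSum_single ENNReal.ofNat_ne_top (g v)).mapL Φ
  simp only [hΦ_single, ← hψ] at h
  exact h

theorem stmt8_general {X : Type*} [NormedAddCommGroup X] [NormedSpace ℝ X]
    {I : Type*} (f : I → StrongDual ℝ X)
    (Tstar : X →L[ℝ] lp (fun _ : I => ℝ) 2)
    (hTstar : ∀ (v : X) (i : I), Tstar v i = f i v)
    (S : X →L[ℝ] StrongDual ℝ X)
    (hS : ∀ v : X, HasSum (fun i => f i v • f i) (S v))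
    (Sinv : StrongDual ℝ X →L[ℝ] X)
    (hleft : ∀ v : X, Sinv (S v) = v)
    (U : lp (fun _ : I => ℝ) 2 →L[ℝ] lp (fun _ : I => ℝ) 2)
    (hU : ∀ α ∈ Set.range Tstar, ContinuousLinearMap.adjoint U (U α) = α)
    (ψ : I → StrongDual ℝ X)
    (hψ : ∀ (k : I) (v : X), ψ k v = U (Tstar v) k) :
    (∀ u v : X, HasSum (fun k => ψ k u * ψ k v) (S u v)) ∧
    (∀ v : X, HasSum (fun k => ψ k v • Sinv (ψ k)) v) := by
  have hS_eq : ∀ v, (innerSL ℝ (Tstar v)).comp Tstar = S v := fun v =>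
    (hasSum_apply_smul_innerSL_comp Tstar f (fun k v => (hTstar v k).symm) v).unique (hS v)
  have hψS : ∀ v, HasSum (fun k => ψ k v • ψ k) (S v) := by
    intro v
    convert hasSum_apply_smul_innerSL_comp (U.comp Tstar) ψ hψ v using 1
    ext u
    simp [← hS_eq, ← adjoint_inner_left, hU]
  refine ⟨fun u v => ?_, fun v => ?_⟩
  · simpa using (hψS u).mapL (apply ℝ ℝ v)
  · simpa [hleft] using (hψS v).mapL Sinv

/-- Let `(f i)` be an ℓ²-frame of `X` with analysis operator `T*`, frame
operator `S` (bijective with bounded inverse `Sinv`), and let `U` be a bounded operator on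
`ℓ²(I)` with `U* (U α) = α` for all `α ∈ range T*` (an isometry on the range of `T*`).
Define `ψ k ∈ X'` by `ψ k v = (U (T* v)) k` and `ψ̃ k = Sinv (ψ k) ∈ X`. Then `(ψ k)` has
the same frame operator as `(f i)`, i.e. `∑ k, ψ k u · ψ k v = (S u) v`, and the
reconstruction `v = ∑ k, ψ k v • ψ̃ k` holds in `X`; in particular `(ψ k)` and `(ψ̃ k)`
are dual frames. -/
theorem stmt8 {X : Type*} [NormedAddCommGroup X] [NormedSpace ℝ X] [CompleteSpace X]
    {I : Type*} [Countable I] (f : I → StrongDual ℝ X) (A B : ℝ)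
    (hA : 0 < A) (hAB : A ≤ B)
    (hsum : ∀ v : X, Summable fun i => (f i v) ^ 2)
    (hlow : ∀ v : X, A * ‖v‖ ^ 2 ≤ ∑' i, (f i v) ^ 2)
    (hup : ∀ v : X, ∑' i, (f i v) ^ 2 ≤ B * ‖v‖ ^ 2)
    (Tstar : X →L[ℝ] lp (fun _ : I => ℝ) 2)
    (hTstar : ∀ (v : X) (i : I), Tstar v i = f i v)
    (S : X →L[ℝ] StrongDual ℝ X)
    (hS : ∀ v : X, HasSum (fun i => f i v • f i) (S v))
    (Sinv : StrongDual ℝ X →L[ℝ] X)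
    (hleft : ∀ v : X, Sinv (S v) = v)
    (hright : ∀ u' : StrongDual ℝ X, S (Sinv u') = u')
    (U : lp (fun _ : I => ℝ) 2 →L[ℝ] lp (fun _ : I => ℝ) 2)
    (hU : ∀ α ∈ Set.range Tstar, ContinuousLinearMap.adjoint U (U α) = α)
    (ψ : I → StrongDual ℝ X)
    (hψ : ∀ (k : I) (v : X), ψ k v = U (Tstar v) k) :
    (∀ u v : X, HasSum (fun k => ψ k u * ψ k v) (S u v)) ∧
    (∀ v : X, HasSum (fun k => ψ k v • Sinv (ψ k)) v) :=
  stmt8_general f Tstar hTstar S hS Sinv hleft U hU ψ hψ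
end
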